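/- Let Q be a probability distribution on a countably infinite alphabet and 0 ≤ δ ≤ 1 − Q↓(1). Then the minimum of the Shannon entropy H(R) over all probability distributions R with total variation distance d(Q, R) ≤ δ equals H(S), where S is obtained from Q↓ by adding δ to the largest mass and truncating the tail: S(1) = Q↓(1) + δ, S(x) = Q↓(x) for 1 < x < B, S(B) = ∑_{k≥B} Q↓(k) − δ, S(x) = 0 for x > B, with B = sup{ b ≥ 1 : ∑_{k≥b} Q↓(k) ≥ δ }. -/

import Mathlib

noncomputable section
open scoped Classical

def IsPmf {α : Type*} (p : α → ℝ) : Prop := (∀ x, 0 ≤ p x) ∧ ∑' x, p x = 1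

def topSum (p : ℕ → ℝ) (k : ℕ) : ℝ :=
  sSup {t : ℝ | ∃ s : Finset ℕ, s.card = k ∧ t = ∑ x ∈ s, p x}

/-- `d` is the decreasing rearrangement of `p` (indexed from `1`). -/
def IsDecRearr (p d : ℕ → ℝ) : Prop :=
  d 0 = 0 ∧ (∀ i j, 1 ≤ i → i ≤ j → d j ≤ d i) ∧
    ∀ k, ∑ i ∈ Finset.Icc 1 k, d i = topSum p k

/-- Shannon entropy, valued in `[0,∞]`. -/
def entE (p : ℕ → ℝ) : ENNReal := ∑' x, ENNReal.ofReal (Real.negMulLog (p x))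

/-- Total variation distance. -/
def tvDist (p q : ℕ → ℝ) : ℝ := (1 / 2) * ∑' x, |p x - q x|

/-- `B := sup{b ≥ 1 | ∑_{k ≥ b} Q↓(k) ≥ δ}`. -/
def truncB (d : ℕ → ℝ) (δ : ℝ) : ℕ∞ :=
  sSup {b : ℕ∞ | ∃ n : ℕ, b = (n : ℕ∞) ∧ 1 ≤ n ∧ δ ≤ ∑' k, d (n + k)}

/-- The entropy-minimizing distribution `S` obtained from `Q↓ = d` by adding
`δ` to the largest mass and truncating the tail at index `B`. -/
def truncS (d : ℕ → ℝ) (δ : ℝ) (x : ℕ) : ℝ :=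
  if x = 1 then d 1 + δ
  else if (x : ℕ∞) < truncB d δ then d x
  else if (x : ℕ∞) = truncB d δ then (∑' k, d (x + k)) - δ
  else 0

/-!
The Shannon entropy has the layer-cake form
`H(p) = ∫₀¹ ((1 - ∑ₓ (p x - t)⁺) / t - 1) dt`, obtained by summing
`-c log c = ∫₀¹ (min c t / t - c) dt` over the atoms. If every top-`k` sum of `R` is at most the
`k`-th partial sum of `S`, then every excess `∑ₓ (R x - t)⁺` is at most `∑ₓ (S x - t)⁺`, hence
`H(S) ≤ H(R)`. If `d(Q, R) ≤ δ`, the top-`k` sums of `R` are at most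
`min (Q↓(1) + ⋯ + Q↓(k) + δ) 1`, and these are exactly the partial sums of `S`.

For attainment, `S` is moved onto the atoms of `Q` along a greedy enumeration of `Q` in
decreasing order. The moved distribution has entropy `H(S)` and is at distance exactly `δ` from
`Q`, because `S ≤ Q↓` everywhere except at the top atom, which gains `δ`.
-/

open Finset Function Filter Topology

lemma Summable.posPart_sub {α : Type*} {p q : α → ℝ} (hq : Summable q) (hq0 : ∀ x, 0 ≤ q x)
    (hp0 : ∀ x, 0 ≤ p x) : Summable fun x => (q x - p x)⁺ :=
  hq.of_nonneg_of_le (fun x => posPart_nonneg _) fun x => sup_le (by linarith [hp0 x]) (hq0 x)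

namespace IsPmf

variable {α : Type*} {p : α → ℝ}

lemma summable (hp : IsPmf p) : Summable p := by
  by_contra h
  simpa [tsum_eq_zero_of_not_summable h] using hp.2

lemma hasSum (hp : IsPmf p) : HasSum p 1 := hp.2 ▸ hp.summable.hasSum

lemma sum_le_one (hp : IsPmf p) (s : Finset α) : ∑ x ∈ s, p x ≤ 1 :=
  hp.2 ▸ hp.summable.sum_le_tsum s fun x _ => hp.1 x

lemma le_one (hp : IsPmf p) (x : α) : p x ≤ 1 := by
  simpa using hp.sum_le_one {x}

lemma tsum_posPart_sub_eq_tvDist {p q : ℕ → ℝ} (hp : IsPmf p) (hq : IsPmf q) :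
    ∑' x, (q x - p x)⁺ = tvDist p q := by
  have habs (x : ℕ) : |p x - q x| = 2 * (q x - p x)⁺ - (q x - p x) := by
    rw [abs_sub_comm, ← posPart_add_negPart]
    linarith [posPart_sub_negPart (q x - p x)]
  rw [tvDist, tsum_congr habs, Summable.tsum_sub
    ((hq.summable.posPart_sub hq.1 hp.1).mul_left 2) (hq.summable.sub hp.summable), tsum_mul_left, Summable.tsum_sub hq.summable hp.summable, hp.2, hq.2]
  ring

end IsPmf

section topSum

variable {p : ℕ → ℝ} {k : ℕ}

lemma le_topSum (hp : IsPmf p) {s : Finset ℕ} (hs : s.card = k) :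
    ∑ x ∈ s, p x ≤ topSum p k :=
  le_csSup ⟨1, by rintro t ⟨s, -, rfl⟩; exact hp.sum_le_one s⟩ ⟨s, hs, rfl⟩

lemma topSum_le {c : ℝ} (h : ∀ s : Finset ℕ, s.card = k → ∑ x ∈ s, p x ≤ c) :
    topSum p k ≤ c :=
  csSup_le ⟨_, range k, card_range k, rfl⟩ (by rintro t ⟨s, hs, rfl⟩; exact h s hs)

lemma topSum_le_one (hp : IsPmf p) (k : ℕ) : topSum p k ≤ 1 :=
  topSum_le fun s _ => hp.sum_le_one s

lemma sum_le_topSum_of_card_le (hp : IsPmf p) {s : Finset ℕ} (h : s.card ≤ k) :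
    ∑ x ∈ s, p x ≤ topSum p k := by
  obtain ⟨t, hst, rfl⟩ := Infinite.exists_superset_card_eq s k h
  exact (sum_le_sum_of_subset_of_nonneg hst fun x _ _ => hp.1 x).trans (le_topSum hp rfl)

lemma topSum_mono (hp : IsPmf p) : Monotone (topSum p) := fun _ _ hab =>
  topSum_le fun _ hs => sum_le_topSum_of_card_le hp (hs ▸ hab)

lemma tendsto_topSum (hp : IsPmf p) : Tendsto (topSum p) atTop (𝓝 1) :=
  tendsto_of_tendsto_of_tendsto_of_le_of_le hp.hasSum.tendsto_sum_nat tendsto_const_nhds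
    (fun n => sum_le_topSum_of_card_le hp (card_range n).le) (topSum_le_one hp)

lemma topSum_le_add_tvDist {q : ℕ → ℝ} (hp : IsPmf p) (hq : IsPmf q) (k : ℕ) :
    topSum q k ≤ topSum p k + tvDist p q := by
  refine topSum_le fun s hs => ?_
  calc ∑ x ∈ s, q x = ∑ x ∈ s, p x + ∑ x ∈ s, (q x - p x) := by
        rw [← sum_add_distrib]; simp
    _ ≤ topSum p k + ∑' x, (q x - p x)⁺ := by
        gcongr
        · exact le_topSum hp hs
        · exact (sum_le_sum fun x _ => le_posPart _).trans
            ((hq.summable.posPart_sub hq.1 hp.1).sum_le_tsum s fun x _ => posPart_nonneg _)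
    _ = topSum p k + tvDist p q := by rw [hp.tsum_posPart_sub_eq_tvDist hq]

end topSum

namespace IsDecRearr

variable {Q d : ℕ → ℝ}

lemma apply_succ (hd : IsDecRearr Q d) (k : ℕ) : d (k + 1) = topSum Q (k + 1) - topSum Q k := by
  rw [← hd.2.2, ← hd.2.2, sum_Icc_succ_top (by omega)]
  ring

lemma sum_range_succ (hd : IsDecRearr Q d) (n : ℕ) : ∑ i ∈ range (n + 1), d i = topSum Q n := by
  induction n with
  | zero => simp [hd.1, ← hd.2.2 0]
  | succ n ih => rw [Finset.sum_range_succ, ih, hd.apply_succ]; ring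

lemma nonneg (hQ : IsPmf Q) (hd : IsDecRearr Q d) (k : ℕ) : 0 ≤ d k := by
  cases k with
  | zero => exact hd.1.ge
  | succ k => exact hd.apply_succ k ▸ sub_nonneg.2 (topSum_mono hQ k.le_succ)

lemma isPmf (hQ : IsPmf Q) (hd : IsDecRearr Q d) : IsPmf d := by
  have hsum : HasSum d 1 := by
    rw [hasSum_iff_tendsto_nat_of_nonneg (hd.nonneg hQ), ← tendsto_add_atTop_iff_nat 1]
    simpa only [hd.sum_range_succ] using tendsto_topSum hQ
  exact ⟨hd.nonneg hQ, hsum.tsum_eq⟩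

lemma tsum_add_eq_one_sub_topSum (hQ : IsPmf Q) (hd : IsDecRearr Q d) (n : ℕ) :
    ∑' k, d (n + 1 + k) = 1 - topSum Q n := by
  rw [← hd.sum_range_succ]
  simp only [add_comm (n + 1)]
  exact ((hasSum_nat_add_iff' (n + 1)).2 (hd.isPmf hQ).hasSum).tsum_eq

end IsDecRearr

section truncS

variable {Q d : ℕ → ℝ} {δ : ℝ}

lemma natCast_succ_le_truncB_iff (hQ : IsPmf Q) (hd : IsDecRearr Q d) (n : ℕ) :
    ((n + 1 : ℕ) : ℕ∞) ≤ truncB d δ ↔ topSum Q n + δ ≤ 1 := by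
  constructor
  · intro h
    by_contra! hn
    have hB : truncB d δ ≤ n := by
      refine sSup_le ?_
      rintro b ⟨m, rfl, hm1, hm⟩
      obtain ⟨m, rfl⟩ := Nat.exists_eq_add_of_le' hm1
      rw [hd.tsum_add_eq_one_sub_topSum hQ] at hm
      have : m < n := by
        by_contra! hnm
        linarith [topSum_mono hQ hnm]
      exact_mod_cast this
    exact absurd (h.trans hB) (by norm_cast; omega)
  · intro h
    exact le_sSup ⟨n + 1, rfl, by omega, by rw [hd.tsum_add_eq_one_sub_topSum hQ]; linarith⟩

lemma truncS_one : truncS d δ 1 = d 1 + δ := if_pos rfl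

lemma truncS_zero (hQ : IsPmf Q) (hd : IsDecRearr Q d) (hδ : δ ≤ 1) : truncS d δ 0 = 0 := by
  have h0 : topSum Q 0 = 0 := by simpa [hd.1] using (hd.sum_range_succ 0).symm
  have hB : ((0 : ℕ) : ℕ∞) < truncB d δ :=
    ENat.natCast_add_one_le_iff.1 ((natCast_succ_le_truncB_iff hQ hd 0).2 (by linarith))
  rw [truncS, if_neg zero_ne_one, if_pos hB, hd.1]

lemma truncS_succ (hQ : IsPmf Q) (hd : IsDecRearr Q d) {k : ℕ} (hk : 1 ≤ k) :
    truncS d δ (k + 1) = min (topSum Q (k + 1) + δ) 1 - min (topSum Q k + δ) 1 := by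
  have hB := natCast_succ_le_truncB_iff (δ := δ) hQ hd
  have hmono := topSum_mono hQ k.le_succ
  rw [truncS, if_neg (by omega)]
  rcases lt_trichotomy ((k + 1 : ℕ) : ℕ∞) (truncB d δ) with hlt | heq | hgt
  · have h1 := (hB (k + 1)).1 (by push_cast; exact ENat.natCast_add_one_le_iff.2 hlt)
    rw [if_pos hlt, min_eq_left h1, min_eq_left (by linarith), hd.apply_succ]
    ring
  · have h1 := (hB k).1 heq.le
    have h2 : 1 < topSum Q (k + 1) + δ := by
      rw [← not_le, ← hB (k + 1), ← heq]; norm_cast; omega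
    rw [if_neg heq.not_lt, if_pos heq, hd.tsum_add_eq_one_sub_topSum hQ, min_eq_right h2.le,
      min_eq_left h1]
    ring
  · have h1 : 1 < topSum Q k + δ := by rw [← not_le, ← hB k]; exact hgt.not_ge
    rw [if_neg (lt_asymm hgt), if_neg hgt.ne', min_eq_right h1.le, min_eq_right (by linarith)]
    ring

lemma sum_Icc_truncS (hQ : IsPmf Q) (hd : IsDecRearr Q d) (hδ1 : δ ≤ 1 - d 1) {k : ℕ}
    (hk : 1 ≤ k) : ∑ i ∈ Icc 1 k, truncS d δ i = min (topSum Q k + δ) 1 := by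
  induction k, hk using Nat.le_induction with
  | base =>
    rw [← hd.2.2, Icc_self, sum_singleton, sum_singleton, truncS_one, min_eq_left (by linarith)]
  | succ k hk ih =>
    rw [sum_Icc_succ_top (by omega), ih, truncS_succ hQ hd hk]
    ring

lemma truncS_le (hQ : IsPmf Q) (hd : IsDecRearr Q d) (hδ : δ ≤ 1) {x : ℕ} (hx : x ≠ 1) :
    truncS d δ x ≤ d x := by
  rcases x with _ | k
  · rw [truncS_zero hQ hd hδ, hd.1]
  · rw [truncS_succ hQ hd (by omega), hd.apply_succ]
    have hmono := topSum_mono hQ k.le_succ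
    simp only [min_def]
    split_ifs <;> linarith

lemma isPmf_truncS (hQ : IsPmf Q) (hd : IsDecRearr Q d) (hδ0 : 0 ≤ δ) (hδ1 : δ ≤ 1 - d 1) :
    IsPmf (truncS d δ) := by
  have hδ : δ ≤ 1 := by linarith [hd.nonneg hQ 1]
  have hnonneg (x : ℕ) : 0 ≤ truncS d δ x := by
    rcases x with _ | _ | k
    · rw [truncS_zero hQ hd hδ]
    · rw [zero_add, truncS_one]; linarith [hd.nonneg hQ 1]
    · rw [truncS_succ hQ hd (by omega), sub_nonneg]
      exact min_le_min_right 1 (by linarith [topSum_mono hQ (k + 1).le_succ])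
  have hpartial : ∀ n, 1 ≤ n → min (topSum Q n + δ) 1 = ∑ i ∈ range (n + 1), truncS d δ i := by
    intro n hn
    rw [Nat.range_succ_eq_Icc_zero, ← insert_Icc_add_one_left_eq_Icc n.zero_le,
      sum_insert (by simp), truncS_zero hQ hd hδ, zero_add, zero_add, sum_Icc_truncS hQ hd hδ1 hn]
  have hlim : Tendsto (fun n => min (topSum Q n + δ) 1) atTop (𝓝 1) := by
    simpa [hδ0] using ((tendsto_topSum hQ).add_const δ).min (tendsto_const_nhds (x := (1 : ℝ)))
  refine ⟨hnonneg, HasSum.tsum_eq ?_⟩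
  rw [hasSum_iff_tendsto_nat_of_nonneg hnonneg, ← tendsto_add_atTop_iff_nat 1]
  exact hlim.congr' (eventually_atTop.2 ⟨1, hpartial⟩)

lemma tvDist_truncS (hQ : IsPmf Q) (hd : IsDecRearr Q d) (hδ0 : 0 ≤ δ) (hδ1 : δ ≤ 1 - d 1) :
    tvDist d (truncS d δ) = δ := by
  have hδ : δ ≤ 1 := by linarith [hd.nonneg hQ 1]
  rw [← (hd.isPmf hQ).tsum_posPart_sub_eq_tvDist (isPmf_truncS hQ hd hδ0 hδ1),
    tsum_eq_single 1 fun x hx => posPart_eq_zero.2 (sub_nonpos.2 (truncS_le hQ hd hδ hx)),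
    truncS_one, add_sub_cancel_left, posPart_eq_self.2 hδ0]

lemma topSum_le_sum_Icc_truncS (hQ : IsPmf Q) (hd : IsDecRearr Q d) (hδ1 : δ ≤ 1 - d 1)
    {R : ℕ → ℝ} (hR : IsPmf R) (hTV : tvDist Q R ≤ δ) (k : ℕ) :
    topSum R k ≤ ∑ i ∈ Icc 1 k, truncS d δ i := by
  rcases Nat.eq_zero_or_pos k with rfl | hk
  · exact topSum_le fun s hs => by simp [card_eq_zero.1 hs]
  · rw [sum_Icc_truncS hQ hd hδ1 hk]
    exact le_min (by linarith [topSum_le_add_tvDist hQ hR k]) (topSum_le_one hR k)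

end truncS

section entropy

open MeasureTheory Set Real

lemma integral_Ioc_mul_inv_sub {c : ℝ} (hc : 0 < c) (hc1 : c ≤ 1) :
    ∫ t in Ioc c 1, (c * t⁻¹ - c) = negMulLog c - c * (1 - c) := by
  have hinv : IntervalIntegrable (fun t : ℝ => t⁻¹) volume c 1 :=
    intervalIntegral.intervalIntegrable_inv (fun t ht => by
      rw [uIcc_of_le hc1] at ht; exact (hc.trans_le ht.1).ne') (continuousOn_id)
  rw [← intervalIntegral.integral_of_le hc1, intervalIntegral.integral_sub (hinv.const_mul c)
    intervalIntegrable_const, intervalIntegral.integral_const_mul, integral_inv (by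
      rw [uIcc_of_le hc1]; exact fun h => h.1.not_gt hc),
    intervalIntegral.integral_const, one_div, log_inv, negMulLog, smul_eq_mul]
  ring

lemma le_min_div {c t : ℝ} (hc0 : 0 ≤ c) (hc1 : c ≤ 1) (ht0 : 0 < t) (ht1 : t ≤ 1) :
    c ≤ min c t / t := by
  rw [le_div_iff₀ ht0]
  exact le_min (mul_le_of_le_one_right hc0 ht1) (mul_le_of_le_one_left ht0.le hc1)

lemma lintegral_min_div_sub {c : ℝ} (hc0 : 0 ≤ c) (hc1 : c ≤ 1) :
    ∫⁻ t in Ioc 0 1, ENNReal.ofReal (min c t / t - c) = ENNReal.ofReal (negMulLog c) := by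
  rcases hc0.eq_or_lt with rfl | hc
  · rw [negMulLog_zero, ENNReal.ofReal_zero, ← lintegral_zero]
    refine setLIntegral_congr_fun measurableSet_Ioc fun t ht => ?_
    simp [min_eq_left ht.1.le]
  have hlow : ∫⁻ t in Ioc 0 c, ENNReal.ofReal (min c t / t - c) = ENNReal.ofReal (c * (1 - c)) := by
    rw [setLIntegral_congr_fun measurableSet_Ioc (g := fun _ => ENNReal.ofReal (1 - c))
      fun t ht => by rw [min_eq_right ht.2, div_self ht.1.ne'], setLIntegral_const,
      volume_Ioc, sub_zero, ← ENNReal.ofReal_mul (by linarith), mul_comm]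
  have hhigh : ∫⁻ t in Ioc c 1, ENNReal.ofReal (min c t / t - c)
      = ENNReal.ofReal (negMulLog c - c * (1 - c)) := by
    have hint : IntegrableOn (fun t => c * t⁻¹ - c) (Ioc c 1) :=
      (ContinuousOn.integrableOn_Icc (by
        refine (continuousOn_const.mul (continuousOn_inv₀.mono ?_)).sub continuousOn_const
        exact fun t ht => (hc.trans_le ht.1).ne')).mono_set Ioc_subset_Icc_self
    have hnonneg : 0 ≤ᵐ[volume.restrict (Ioc c 1)] fun t => c * t⁻¹ - c :=
      (ae_restrict_iff' measurableSet_Ioc).2 (.of_forall fun t ht => by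
        show 0 ≤ c * t⁻¹ - c
        rw [sub_nonneg]
        exact le_mul_of_one_le_right hc.le (one_le_inv₀ (hc.trans ht.1) |>.2 ht.2))
    rw [setLIntegral_congr_fun measurableSet_Ioc (g := fun t => ENNReal.ofReal (c * t⁻¹ - c))
      fun t ht => by rw [min_eq_left ht.1.le, div_eq_mul_inv],
      ← ofReal_integral_eq_lintegral_ofReal hint hnonneg, integral_Ioc_mul_inv_sub hc hc1]
  have hlog : c * (1 - c) ≤ negMulLog c := by
    rw [negMulLog]; nlinarith [log_le_sub_one_of_pos hc]
  rw [← Ioc_union_Ioc_eq_Ioc hc.le hc1, lintegral_union measurableSet_Ioc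
    (Ioc_disjoint_Ioc_of_le le_rfl), hlow, hhigh, ← ENNReal.ofReal_add (by nlinarith)
    (by linarith), add_sub_cancel]

lemma entE_eq_lintegral {p : ℕ → ℝ} (hp : IsPmf p) :
    entE p = ∫⁻ t in Ioc 0 1, ENNReal.ofReal ((1 - ∑' x, (p x - t)⁺) / t - 1) := by
  calc entE p = ∑' x, ∫⁻ t in Ioc 0 1, ENNReal.ofReal (min (p x) t / t - p x) :=
        tsum_congr fun x => (lintegral_min_div_sub (hp.1 x) (hp.le_one x)).symm
    _ = ∫⁻ t in Ioc 0 1, ∑' x, ENNReal.ofReal (min (p x) t / t - p x) :=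
        (lintegral_tsum fun x => by fun_prop).symm
    _ = _ := setLIntegral_congr_fun measurableSet_Ioc fun t ht => by
        have hpos := hp.summable.posPart_sub hp.1 fun _ => ht.1.le
        have hmin (x : ℕ) : min (p x) t / t - p x = (p x - (p x - t)⁺) / t - p x := by
          rw [← inf_eq_sub_posPart_sub]
        have hdiv := (hp.summable.sub hpos).div_const t
        rw [← ENNReal.ofReal_tsum_of_nonneg (fun x => sub_nonneg.2
          (le_min_div (hp.1 x) (hp.le_one x) ht.1 ht.2))
          (by simpa only [hmin] using hdiv.sub hp.summable)]
        simp_rw [hmin]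
        rw [hdiv.tsum_sub hp.summable, tsum_div_const, hp.summable.tsum_sub hpos, hp.2]

variable {R S : ℕ → ℝ}

lemma tsum_posPart_sub_le_of_topSum_le (hR : IsPmf R) (hS : IsPmf S)
    (h : ∀ k, topSum R k ≤ ∑ i ∈ Icc 1 k, S i) {t : ℝ} (ht : 0 ≤ t) :
    ∑' x, (R x - t)⁺ ≤ ∑' x, (S x - t)⁺ := by
  refine (hR.summable.posPart_sub hR.1 fun _ => ht).tsum_le_of_sum_le fun s => ?_
  set F := s.filter fun x => 0 ≤ R x - t
  calc ∑ x ∈ s, (R x - t)⁺ = ∑ x ∈ F, (R x - t) := by rw [sum_filter]; simp_rw [posPart_eq_ite]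
    _ = ∑ x ∈ F, R x - #F * t := by rw [sum_sub_distrib, sum_const, nsmul_eq_mul]
    _ ≤ ∑ i ∈ Icc 1 #F, S i - #F * t := by gcongr; exact (le_topSum hR rfl).trans (h _)
    _ = ∑ i ∈ Icc 1 #F, (S i - t) := by simp [sum_sub_distrib]
    _ ≤ ∑ i ∈ Icc 1 #F, (S i - t)⁺ := sum_le_sum fun _ _ => le_posPart _
    _ ≤ ∑' x, (S x - t)⁺ :=
        (hS.summable.posPart_sub hS.1 fun _ => ht).sum_le_tsum _ fun _ _ => posPart_nonneg _

lemma entE_le_of_topSum_le_sum_Icc (hR : IsPmf R) (hS : IsPmf S)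
    (h : ∀ k, topSum R k ≤ ∑ i ∈ Icc 1 k, S i) : entE S ≤ entE R := by
  rw [entE_eq_lintegral hS, entE_eq_lintegral hR]
  refine setLIntegral_mono' measurableSet_Ioc fun t ht => ENNReal.ofReal_le_ofReal ?_
  have := tsum_posPart_sub_le_of_topSum_le hR hS h ht.1.le
  gcongr
  exact ht.1.le

end entropy

lemma Finset.sum_le_sum_of_card_eq_of_forall_le {ι M : Type*} [AddCommMonoid M] [LinearOrder M]
    [IsOrderedCancelAddMonoid M] {f : ι → M} {s t : Finset ι} (h : ∀ x ∉ s, ∀ y ∈ s, f x ≤ f y)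
    (hc : #t = #s) : ∑ x ∈ t, f x ≤ ∑ x ∈ s, f x := by
  have hsdiff : ∑ x ∈ t \ s, f x ≤ ∑ x ∈ s \ t, f x := by
    rcases (s \ t).eq_empty_or_nonempty with he | hne
    · rw [sdiff_eq_empty_iff_subset] at he
      rw [eq_of_subset_of_card_le he hc.le]
    obtain ⟨m, hm, hmin⟩ := (s \ t).exists_min_image f hne
    calc ∑ x ∈ t \ s, f x ≤ #(t \ s) • f m :=
          sum_le_card_nsmul _ _ _ fun x hx => h x (mem_sdiff.1 hx).2 m (mem_sdiff.1 hm).1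
      _ = #(s \ t) • f m := by rw [card_sdiff_comm hc]
      _ ≤ ∑ x ∈ s \ t, f x := card_nsmul_le_sum _ _ _ hmin
  rw [← sum_inter_add_sum_sdiff t s, ← sum_inter_add_sum_sdiff s t, inter_comm]
  exact add_le_add_right hsdiff _

section greedy

variable {p : ℕ → ℝ}

lemma IsPmf.exists_max_compl (hp : IsPmf p) (s : Finset ℕ) :
    ∃ x ∉ s, ∀ y ∉ s, p y ≤ p x := by
  by_cases h : ∃ y ∉ s, 0 < p y
  · obtain ⟨y₀, hy₀s, hy₀⟩ := h
    have hfin : {y | p y₀ ≤ p y}.Finite := by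
      simpa only [not_lt] using
        eventually_cofinite.1 (hp.summable.tendsto_cofinite_zero.eventually (gt_mem_nhds hy₀))
    obtain ⟨x, ⟨hx, hxs⟩, hmax⟩ :=
      Set.exists_max_image _ p (hfin.sdiff (t := ↑s)) ⟨y₀, le_refl (p y₀), hy₀s⟩
    refine ⟨x, hxs, fun y hy => ?_⟩
    by_cases hy' : p y₀ ≤ p y
    · exact hmax y ⟨hy', hy⟩
    · exact (not_le.1 hy').le.trans hx
  · push Not at h
    obtain ⟨x, hx⟩ := Infinite.exists_notMem_finset s
    exact ⟨x, hx, fun y hy => (h y hy).trans (hp.1 x)⟩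

def greedySet (hp : IsPmf p) : ℕ → Finset ℕ
  | 0 => ∅
  | k + 1 => insert (hp.exists_max_compl (greedySet hp k)).choose (greedySet hp k)

-- the `k`-th largest atom of `p`, counting from `0`
def greedyEnum (hp : IsPmf p) (k : ℕ) : ℕ := (hp.exists_max_compl (greedySet hp k)).choose

variable (hp : IsPmf p)

lemma greedyEnum_notMem (k : ℕ) : greedyEnum hp k ∉ greedySet hp k :=
  (hp.exists_max_compl (greedySet hp k)).choose_spec.1

lemma le_greedyEnum {k y : ℕ} (hy : y ∉ greedySet hp k) : p y ≤ p (greedyEnum hp k) :=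
  (hp.exists_max_compl (greedySet hp k)).choose_spec.2 y hy

lemma greedySet_succ (k : ℕ) :
    greedySet hp (k + 1) = insert (greedyEnum hp k) (greedySet hp k) := rfl

lemma greedySet_eq_image (k : ℕ) : greedySet hp k = (range k).image (greedyEnum hp) := by
  induction k with
  | zero => rfl
  | succ k ih => rw [greedySet_succ, ih, range_add_one, image_insert]

lemma greedyEnum_injective : Injective (greedyEnum hp) :=
  .of_lt_imp_ne fun i j hij h => greedyEnum_notMem hp j <| by
    rw [greedySet_eq_image, ← h]; exact mem_image_of_mem _ (mem_range.2 hij)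

lemma sum_greedySet (k : ℕ) : ∑ x ∈ greedySet hp k, p x = topSum p k := by
  have hcard : #(greedySet hp k) = k := by
    rw [greedySet_eq_image, card_image_of_injective _ (greedyEnum_injective hp), card_range]
  refine le_antisymm (le_topSum hp hcard) (topSum_le fun s hs => ?_)
  refine sum_le_sum_of_card_eq_of_forall_le (fun x hx y hy => ?_) (hs.trans hcard.symm)
  rw [greedySet_eq_image] at hx hy
  obtain ⟨i, hi, rfl⟩ := mem_image.1 hy
  exact le_greedyEnum hp fun hxi => hx <| by
    rw [greedySet_eq_image] at hxi
    exact image_subset_image (range_subset_range.2 (mem_range.1 hi).le) hxi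

end greedy

lemma tsum_add_one_of_eq_zero {M : Type*} [AddCommMonoid M] [TopologicalSpace M] {f : ℕ → M}
    (h : f 0 = 0) : ∑' k, f (k + 1) = ∑' k, f k :=
  (add_left_injective 1).tsum_eq fun x hx =>
    ⟨x - 1, Nat.sub_add_cancel (Nat.pos_of_ne_zero fun h0 => hx (h0 ▸ h))⟩

def relabel (τ : ℕ → ℕ) (p : ℕ → ℝ) : ℕ → ℝ := extend τ (fun k => p (k + 1)) 0

section relabel

variable {τ : ℕ → ℕ} {p q : ℕ → ℝ}

lemma tsum_relabel {M : Type*} [AddCommMonoid M] [TopologicalSpace M] (hτ : Injective τ)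
    (hp : p 0 = 0) (hq : q 0 = 0) {F : ℝ → ℝ → M} (hF : F 0 0 = 0) :
    ∑' x, F (relabel τ p x) (relabel τ q x) = ∑' x, F (p x) (q x) := by
  have hext : (fun x => F (relabel τ p x) (relabel τ q x))
      = extend τ (fun k => F (p (k + 1)) (q (k + 1))) 0 := by
    funext x
    by_cases hx : ∃ k, τ k = x
    · obtain ⟨k, rfl⟩ := hx
      simp only [relabel, hτ.extend_apply]
    · simp only [relabel, extend_apply' _ _ _ hx, Pi.zero_apply, hF]
  rw [hext, tsum_extend_zero hτ, tsum_add_one_of_eq_zero (f := fun x => F (p x) (q x))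
    (by simp only [hp, hq, hF])]

lemma IsPmf.relabel (hp : IsPmf p) (hp0 : p 0 = 0) (hτ : Injective τ) : IsPmf (relabel τ p) := by
  refine ⟨fun x => ?_, ?_⟩
  · by_cases hx : ∃ k, τ k = x
    · obtain ⟨k, rfl⟩ := hx
      rw [_root_.relabel, hτ.extend_apply]
      exact hp.1 _
    · rw [_root_.relabel, extend_apply' _ _ _ hx, Pi.zero_apply]
  · rw [← hp.2]
    exact tsum_relabel (F := fun _ b => b) hτ hp0 hp0 rfl

lemma entE_relabel (hτ : Injective τ) (hp0 : p 0 = 0) : entE (relabel τ p) = entE p :=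
  tsum_relabel (F := fun _ b => ENNReal.ofReal (Real.negMulLog b)) hτ hp0 hp0 (by simp)

lemma tvDist_relabel (hτ : Injective τ) (hp0 : p 0 = 0) (hq0 : q 0 = 0) :
    tvDist (relabel τ p) (relabel τ q) = tvDist p q := by
  rw [tvDist, tvDist, tsum_relabel (F := fun a b => |a - b|) hτ hp0 hq0 (by simp)]

end relabel

lemma exists_injective_eq_relabel {Q d : ℕ → ℝ} (hQ : IsPmf Q) (hd : IsDecRearr Q d) :
    ∃ τ : ℕ → ℕ, Injective τ ∧ Q = relabel τ d := by
  have hval (k : ℕ) : Q (greedyEnum hQ k) = d (k + 1) := by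
    rw [hd.apply_succ, ← sum_greedySet hQ, ← sum_greedySet hQ, greedySet_succ,
      sum_insert (greedyEnum_notMem hQ k)]
    ring
  refine ⟨greedyEnum hQ, greedyEnum_injective hQ, funext fun x => ?_⟩
  by_cases hx : ∃ k, greedyEnum hQ k = x
  · obtain ⟨k, rfl⟩ := hx
    rw [relabel, (greedyEnum_injective hQ).extend_apply, hval]
  · rw [relabel, extend_apply' _ _ _ hx, Pi.zero_apply]
    have hd0 : Tendsto (fun k => d (k + 1)) atTop (𝓝 0) :=
      (hd.isPmf hQ).summable.tendsto_atTop_zero.comp (tendsto_add_atTop_nat 1)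
    refine le_antisymm (ge_of_tendsto' hd0 fun k => ?_) (hQ.1 x)
    rw [← hval]
    refine le_greedyEnum hQ fun hxk => hx ?_
    rw [greedySet_eq_image] at hxk
    obtain ⟨i, -, hi⟩ := mem_image.1 hxk
    exact ⟨i, hi⟩

/-- Ho–Yeung: the minimum of the Shannon entropy `H(R)` over all distributions
`R` with total variation distance `d(Q,R) ≤ δ` equals `H(S)`, with `S` as
above. -/
theorem stmt_11 (Q d : ℕ → ℝ) (δ : ℝ) (hQ : IsPmf Q) (hd : IsDecRearr Q d)
    (hδ0 : 0 ≤ δ) (hδ1 : δ ≤ 1 - d 1) :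
    (∀ R : ℕ → ℝ, IsPmf R → tvDist Q R ≤ δ → entE (truncS d δ) ≤ entE R) ∧
    (∃ R : ℕ → ℝ, IsPmf R ∧ tvDist Q R ≤ δ ∧ entE R = entE (truncS d δ)) := by
  obtain ⟨τ, hτ, hQτ⟩ := exists_injective_eq_relabel hQ hd
  have hS := isPmf_truncS hQ hd hδ0 hδ1
  have hS0 : truncS d δ 0 = 0 := truncS_zero hQ hd (by linarith [hd.nonneg hQ 1])
  refine ⟨fun R hR hTV => entE_le_of_topSum_le_sum_Icc hR hS
    (topSum_le_sum_Icc_truncS hQ hd hδ1 hR hTV), relabel τ (truncS d δ), hS.relabel hS0 hτ,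
    ?_, entE_relabel hτ hS0⟩
  rw [hQτ, tvDist_relabel hτ hd.1 hS0, tvDist_truncS hQ hd hδ0 hδ1]
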